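/- (Lemma 1, rotation modeling of covariance matrices) For every dimension n ≥ 2 and every symmetric positive semidefinite matrix Q ∈ ℝ^{n×n}, there exist nonnegative reals λ_1, …, λ_n and angles θ = (θ_{ij})_{1 ≤ i < j ≤ n} in ℝ such that Q = V(θ) Λ V(θ)ᵀ, where Λ = diag(λ_1, …, λ_n) and V(θ) = ∏_{i=1}^{n−1} ∏_{j=i+1}^{n} G_{ij}(θ_{ij}) with factors multiplied in lexicographic order of (i,j). Conversely, every matrix of the form V(θ) Λ V(θ)ᵀ with Λ diagonal and nonnegative is symmetric positive semidefinite. -/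

import Mathlib

/-!
By the spectral theorem `Q = U diag(λ) Uᵀ` with `U` orthogonal and `λ ≥ 0`; flipping the sign of
one column of `U` (a diagonal `±1` matrix commutes with `diag(λ)`) makes `det U = 1`. Every
rotation is a lexicographic product of Givens rotations, by induction on `n`: the first block
`P = G₀₁(t₁) ⋯ G₀ₙ(tₙ)` of `V(θ)` sends `e₀` to the unit vector with hyperspherical coordinates
`t`, so `t` can be chosen with `P e₀ = U e₀`; then `Pᵀ U` fixes `e₀`, hence is a rotation of the
remaining coordinates, which the remaining factors of `V(θ)` realise. The converse is the
invariance of positive semidefiniteness under congruence.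
-/

open Matrix

/-- The Givens rotation matrix `G_{ij}(θ) ∈ ℝ^{n×n}`: the identity matrix except for the
entries `(i,i) = (j,j) = cos θ`, `(i,j) = -sin θ` and `(j,i) = sin θ`. -/
noncomputable def givensMat (n : ℕ) (i j : Fin n) (θ : ℝ) : Matrix (Fin n) (Fin n) ℝ :=
  fun k l =>
    if k = i ∧ l = i then Real.cos θ
    else if k = j ∧ l = j then Real.cos θ
    else if k = i ∧ l = j then -Real.sin θ
    else if k = j ∧ l = i then Real.sin θ
    else if k = l then 1 else 0

/-- `V(θ) = ∏_{i=1}^{n-1} ∏_{j=i+1}^{n} G_{ij}(θ_{ij})`, the factors multiplied in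
lexicographic order of the index pairs `(i,j)`. -/
noncomputable def rotMat (n : ℕ) (θ : Fin n → Fin n → ℝ) : Matrix (Fin n) (Fin n) ℝ :=
  (((List.finRange n).map (fun i =>
      ((List.finRange n).filter (fun j => i < j)).map
        (fun j => givensMat n i j (θ i j)))).flatten).prod

variable {n : ℕ}

lemma det_mul_self_of_mem_orthogonalGroup {ι R : Type*} [Fintype ι] [DecidableEq ι] [CommRing R]
    {A : Matrix ι ι R} (hA : A ∈ orthogonalGroup ι R) : A.det * A.det = 1 := by
  simpa [det_transpose] using congrArg det ((mem_orthogonalGroup_iff' ι R).mp hA)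

section Givens

variable {i j : Fin n}

lemma givensMat_apply (h : i ≠ j) (θ : ℝ) (k l : Fin n) :
    givensMat n i j θ k l =
      if k = i then (if l = i then Real.cos θ else if l = j then -Real.sin θ else 0)
      else if k = j then (if l = i then Real.sin θ else if l = j then Real.cos θ else 0)
      else if l = k then 1 else 0 := by
  unfold givensMat
  by_cases hki : k = i <;> by_cases hkj : k = j <;> by_cases hli : l = i <;>
    by_cases hlj : l = j <;> simp only [hki, hkj, hli, hlj] <;> grind

lemma givensMat_mul_apply (h : i ≠ j) (θ : ℝ) (X : Matrix (Fin n) (Fin n) ℝ) (k l : Fin n) :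
    (givensMat n i j θ * X) k l =
      if k = i then Real.cos θ * X i l - Real.sin θ * X j l
      else if k = j then Real.sin θ * X i l + Real.cos θ * X j l
      else X k l := by
  simp only [mul_apply, givensMat_apply h]
  split_ifs <;> simp [ite_mul, Finset.sum_ite, Finset.filter_eq', Finset.filter_ne', h.symm,
    sub_eq_add_neg, *]

lemma givensMat_mul_givensMat (h : i ≠ j) (α β : ℝ) :
    givensMat n i j α * givensMat n i j β = givensMat n i j (α + β) := by
  ext k l
  rw [givensMat_mul_apply h]
  simp only [givensMat_apply h, Real.cos_add, Real.sin_add]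
  split_ifs <;> grind

lemma givensMat_zero (h : i ≠ j) : givensMat n i j 0 = 1 := by
  ext k l
  simp only [givensMat_apply h, one_apply, Real.cos_zero, Real.sin_zero, neg_zero]
  split_ifs <;> grind

lemma transpose_givensMat (h : i ≠ j) (θ : ℝ) :
    (givensMat n i j θ)ᵀ = givensMat n i j (-θ) := by
  ext k l
  simp only [transpose_apply, givensMat_apply h, Real.cos_neg, Real.sin_neg, neg_neg]
  split_ifs <;> grind

lemma givensMat_mem_specialOrthogonalGroup (h : i ≠ j) (θ : ℝ) :
    givensMat n i j θ ∈ specialOrthogonalGroup (Fin n) ℝ := by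
  have horth : givensMat n i j θ ∈ orthogonalGroup (Fin n) ℝ := by
    rw [mem_orthogonalGroup_iff', transpose_givensMat h, givensMat_mul_givensMat h,
      neg_add_cancel, givensMat_zero h]
  -- the determinant is `±1`, and it is a square since `G(θ) = G(θ/2)²`
  have hsq : (givensMat n i j θ).det = (givensMat n i j (θ / 2)).det ^ 2 := by
    rw [sq, ← det_mul, givensMat_mul_givensMat h, add_halves]
  refine ⟨horth, ?_⟩
  rcases mul_self_eq_one_iff.mp (det_mul_self_of_mem_orthogonalGroup horth) with h1 | h1
  · exact h1
  · nlinarith [sq_nonneg (givensMat n i j (θ / 2)).det]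

end Givens

section LiftAt

variable {R : Type*} [CommRing R]

def finSuccEquivSumUnit (p : Fin (n + 1)) : Fin (n + 1) ≃ Fin n ⊕ Unit :=
  (finSuccEquiv' p).trans (Equiv.optionEquivSumPUnit.{0, 0} (Fin n))

/-- `liftAt p M` acts as `M` on the coordinates other than `p` and fixes the `p`-th basis
vector. -/
noncomputable def liftAt (p : Fin (n + 1)) :
    Matrix (Fin n) (Fin n) R →* Matrix (Fin (n + 1)) (Fin (n + 1)) R where
  toFun M := (fromBlocks M 0 0 1).submatrix (finSuccEquivSumUnit p) (finSuccEquivSumUnit p)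
  map_one' := by rw [fromBlocks_one, submatrix_one_equiv]
  map_mul' M N := by
    rw [submatrix_mul_equiv, fromBlocks_multiply]
    simp

variable (p : Fin (n + 1)) (M : Matrix (Fin n) (Fin n) R)

@[simp]
lemma liftAt_apply_succAbove_succAbove (a b : Fin n) :
    liftAt p M (p.succAbove a) (p.succAbove b) = M a b := by
  simp [liftAt, finSuccEquivSumUnit]

@[simp]
lemma liftAt_apply_self_self : liftAt p M p p = 1 := by
  simp [liftAt, finSuccEquivSumUnit]

@[simp]
lemma liftAt_apply_self_succAbove (b : Fin n) : liftAt p M p (p.succAbove b) = 0 := by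
  simp [liftAt, finSuccEquivSumUnit]

@[simp]
lemma liftAt_apply_succAbove_self (a : Fin n) : liftAt p M (p.succAbove a) p = 0 := by
  simp [liftAt, finSuccEquivSumUnit]

lemma transpose_liftAt : (liftAt p M)ᵀ = liftAt p Mᵀ := by
  simp [liftAt, transpose_submatrix, fromBlocks_transpose]

lemma det_liftAt : (liftAt p M).det = M.det := by
  simp [liftAt, det_submatrix_equiv_self]

lemma liftAt_injective : Function.Injective (liftAt (R := R) p) := fun M N h => by
  ext a b
  simpa using congrFun₂ h (p.succAbove a) (p.succAbove b)

lemma liftAt_mem_specialOrthogonalGroup_iff :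
    liftAt p M ∈ specialOrthogonalGroup (Fin (n + 1)) R ↔
      M ∈ specialOrthogonalGroup (Fin n) R := by
  simp only [mem_specialOrthogonalGroup_iff, mem_orthogonalGroup_iff', det_liftAt,
    transpose_liftAt, ← map_mul, ← map_one (liftAt p), (liftAt_injective p).eq_iff]

end LiftAt

lemma liftAt_givensMat (p : Fin (n + 1)) {i j : Fin n} (h : i ≠ j) (θ : ℝ) :
    liftAt p (givensMat n i j θ) = givensMat (n + 1) (p.succAbove i) (p.succAbove j) θ := by
  have h' : p.succAbove i ≠ p.succAbove j := p.succAbove_right_injective.ne h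
  ext a b
  rw [givensMat_apply h']
  induction a using p.succAboveCases <;> induction b using p.succAboveCases <;>
    simp [givensMat_apply h, Fin.succAbove_ne, (Fin.succAbove_ne _ _).symm]

/-- The factors of `rotMat (n + 1)` with first index `0`: `G₀₁(t 1) ⋯ G₀ₙ(t n)`. -/
noncomputable def rotMatFirstRow (n : ℕ) (t : Fin (n + 1) → ℝ) :
    Matrix (Fin (n + 1)) (Fin (n + 1)) ℝ :=
  (((List.finRange (n + 1)).filter (fun j => 0 < j)).map
    (fun j => givensMat (n + 1) 0 j (t j))).prod

lemma List.filter_finRange_succ (P : Fin (n + 1) → Prop) [DecidablePred P] (h0 : ¬ P 0) :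
    (finRange (n + 1)).filter P = ((finRange n).filter (fun j => P j.succ)).map Fin.succ := by
  simp [List.finRange_succ, h0, List.filter_map, Function.comp_def]

lemma rotMat_succ (θ : Fin (n + 1) → Fin (n + 1) → ℝ) :
    rotMat (n + 1) θ =
      rotMatFirstRow n (θ 0) * liftAt 0 (rotMat n fun i j => θ i.succ j.succ) := by
  rw [rotMat, rotMat, ← List.ofFn_eq_map, List.ofFn_succ, List.flatten_cons, List.prod_append,
    map_list_prod, List.map_flatten, List.map_map, List.ofFn_eq_map]
  congr 3
  refine List.map_congr_left fun i _ => ?_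
  rw [List.filter_finRange_succ _ (by simp), Function.comp_apply, List.map_map, List.map_map]
  simp only [Fin.succ_lt_succ_iff]
  refine List.map_congr_left fun j hj => ?_
  have hij : i < j := by simpa using List.of_mem_filter hj
  exact (liftAt_givensMat 0 hij.ne _).symm

lemma rotMatFirstRow_insertNth (φ : ℝ) (t : Fin (n + 1) → ℝ) :
    rotMatFirstRow (n + 1) (Fin.insertNth 1 φ t) =
      givensMat (n + 2) 0 1 φ * liftAt 1 (rotMatFirstRow n t) := by
  rw [rotMatFirstRow, rotMatFirstRow, List.filter_finRange_succ (n := n + 1) _ (lt_irrefl 0),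
    List.filter_finRange_succ (n := n) _ (lt_irrefl 0), map_list_prod]
  simp only [Fin.succ_pos, decide_true, List.filter_true, List.map_map]
  rw [← List.ofFn_eq_map, List.ofFn_succ, List.prod_cons, ← List.ofFn_eq_map]
  congr 3
  funext i
  have h := liftAt_givensMat 1 (Fin.succ_ne_zero i).symm (t i.succ)
  have h' : Fin.insertNth (α := fun _ => ℝ) 1 φ t i.succ.succ = t i.succ := by
    rw [← Fin.one_succAbove_succ, Fin.insertNth_apply_succAbove]
  simpa [h'] using h.symm

lemma col_rotMatFirstRow_insertNth (φ : ℝ) (t : Fin (n + 1) → ℝ) :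
    (rotMatFirstRow (n + 1) (Fin.insertNth 1 φ t)).col 0 =
      Fin.cons (Real.cos φ * rotMatFirstRow n t 0 0)
        (Fin.cons (Real.sin φ * rotMatFirstRow n t 0 0) fun k => rotMatFirstRow n t k.succ 0) := by
  ext k
  rw [col_apply, rotMatFirstRow_insertNth, givensMat_mul_apply zero_ne_one]
  set R := rotMatFirstRow n t
  have hcol (a : Fin (n + 1)) : liftAt 1 R ((1 : Fin (n + 2)).succAbove a) 0 = R a 0 :=
    liftAt_apply_succAbove_succAbove 1 R a 0
  have h00 : liftAt 1 R 0 0 = R 0 0 := hcol 0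
  have h10 : liftAt 1 R 1 0 = 0 := liftAt_apply_self_succAbove 1 R 0
  induction k using Fin.cases with
  | zero => simp [h00, h10]
  | succ k =>
    induction k using Fin.cases with
    | zero => simp [h00, h10]
    | succ k => simpa [Fin.succ_ne_zero, Fin.succ_succ_ne_one] using hcol k.succ

lemma rotMatFirstRow_zero (t : Fin 1 → ℝ) : rotMatFirstRow 0 t = 1 := by
  simp [rotMatFirstRow, List.filter_finRange_succ]

lemma rotMatFirstRow_mem_specialOrthogonalGroup (t : Fin (n + 1) → ℝ) :
    rotMatFirstRow n t ∈ specialOrthogonalGroup (Fin (n + 1)) ℝ := by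
  refine Submonoid.list_prod_mem _ fun M hM => ?_
  obtain ⟨j, hj, rfl⟩ := List.mem_map.mp hM
  have hj : 0 < j := by simpa using List.of_mem_filter hj
  exact givensMat_mem_specialOrthogonalGroup hj.ne _

/-- For `n = 0` the matrix `rotMatFirstRow 0 t` is `1`, whence the sign condition. -/
lemma exists_col_rotMatFirstRow_eq (u : Fin (n + 1) → ℝ) (hu : u ⬝ᵥ u = 1)
    (hpos : 0 < n ∨ 0 ≤ u 0) : ∃ t, (rotMatFirstRow n t).col 0 = u := by
  induction n with
  | zero =>
    have hu0 : u 0 * u 0 = 1 := by simpa [dotProduct] using hu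
    have h0 : u 0 = 1 := by nlinarith [hpos.resolve_left (lt_irrefl 0)]
    refine ⟨0, funext fun k => ?_⟩
    rw [Fin.fin_one_eq_zero k, col_apply, rotMatFirstRow_zero, one_apply_eq, h0]
  | succ n ih =>
    induction u using Fin.consCases with | cons a u =>
    induction u using Fin.consCases with | cons b w =>
    let z : ℂ := ⟨a, b⟩
    have hz : ‖z‖ ^ 2 = a * a + b * b := by rw [Complex.sq_norm, Complex.normSq_mk]
    have hunit : Fin.cons ‖z‖ w ⬝ᵥ Fin.cons ‖z‖ w = 1 := by
      simpa [dotProduct, Fin.sum_univ_succ, ← sq, hz, add_assoc] using hu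
    obtain ⟨t, ht⟩ := ih _ hunit (Or.inr (norm_nonneg z))
    refine ⟨Fin.insertNth 1 z.arg t, ?_⟩
    have h0 : rotMatFirstRow n t 0 0 = ‖z‖ := congrFun ht 0
    have hsucc : (fun k => rotMatFirstRow n t k.succ 0) = w := funext fun k => congrFun ht k.succ
    rw [col_rotMatFirstRow_insertNth, h0, hsucc, mul_comm, Complex.norm_mul_cos_arg, mul_comm,
      Complex.norm_mul_sin_arg]

lemma eq_liftAt_zero_of_mulVec_single {R : Type*} [CommRing R]
    {W : Matrix (Fin (n + 1)) (Fin (n + 1)) R} (hW : W ∈ orthogonalGroup (Fin (n + 1)) R)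
    (h : W *ᵥ Pi.single 0 1 = Pi.single 0 1) : W = liftAt 0 (W.submatrix Fin.succ Fin.succ) := by
  have hT : Wᵀ *ᵥ Pi.single 0 1 = Pi.single 0 1 := by
    conv_lhs => rw [← h, mulVec_mulVec, (mem_orthogonalGroup_iff' _ R).mp hW, one_mulVec]
  have hcol (k : Fin (n + 1)) : W k 0 = Pi.single (M := fun _ => R) 0 1 k := by
    rw [← h, mulVec_single_one, col_apply]
  have hrow (k : Fin (n + 1)) : W 0 k = Pi.single (M := fun _ => R) 0 1 k := by
    rw [← hT, mulVec_single_one, col_apply, transpose_apply]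
  ext a b
  induction a using Fin.cases <;> induction b using Fin.cases
  · simpa using hcol 0
  · rw [hrow, Pi.single_eq_of_ne (Fin.succ_ne_zero _)]
    exact (liftAt_apply_self_succAbove 0 _ _).symm
  · rw [hcol, Pi.single_eq_of_ne (Fin.succ_ne_zero _)]
    exact (liftAt_apply_succAbove_self 0 _ _).symm
  · exact (liftAt_apply_succAbove_succAbove 0 _ _ _).symm

theorem exists_rotMat_eq_of_mem_specialOrthogonalGroup {U : Matrix (Fin n) (Fin n) ℝ}
    (hU : U ∈ specialOrthogonalGroup (Fin n) ℝ) : ∃ θ, rotMat n θ = U := by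
  induction n with
  | zero => exact ⟨0, Subsingleton.elim _ _⟩
  | succ n ih =>
    obtain ⟨hUo, hUdet⟩ := mem_specialOrthogonalGroup_iff.mp hU
    have hunit : U.col 0 ⬝ᵥ U.col 0 = 1 := by
      have h := congrFun₂ ((mem_orthogonalGroup_iff' _ ℝ).mp hUo) 0 0
      rwa [mul_apply', one_apply_eq] at h
    have hsign : 0 < n ∨ 0 ≤ U.col 0 0 := by
      rcases n.eq_zero_or_pos with rfl | hn
      · exact Or.inr (by rw [col_apply, ← det_fin_one U, hUdet]; exact zero_le_one)
      · exact Or.inl hn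
    obtain ⟨t, ht⟩ := exists_col_rotMatFirstRow_eq _ hunit hsign
    obtain ⟨hPo, hPdet⟩ :=
      mem_specialOrthogonalGroup_iff.mp (rotMatFirstRow_mem_specialOrthogonalGroup t)
    set P := rotMatFirstRow n t
    have hW : Pᵀ * U ∈ specialOrthogonalGroup (Fin (n + 1)) ℝ :=
      mem_specialOrthogonalGroup_iff.mpr ⟨mul_mem (transpose_mem_unitaryGroup_iff.mpr hPo) hUo,
        by rw [det_mul, det_transpose, hPdet, hUdet, one_mul]⟩
    have hWe : (Pᵀ * U) *ᵥ Pi.single 0 1 = Pi.single 0 1 := by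
      rw [← mulVec_mulVec, mulVec_single_one, ← ht, ← mulVec_single_one, mulVec_mulVec,
        (mem_orthogonalGroup_iff' _ ℝ).mp hPo, one_mulVec]
    have hblock := eq_liftAt_zero_of_mulVec_single hW.1 hWe
    rw [hblock, liftAt_mem_specialOrthogonalGroup_iff] at hW
    obtain ⟨θ, hθ⟩ := ih hW
    refine ⟨Fin.cons t fun i => Fin.cons 0 (θ i), ?_⟩
    rw [rotMat_succ]
    simp only [Fin.cons_zero, Fin.cons_succ]
    rw [hθ, ← hblock, ← mul_assoc, (mem_orthogonalGroup_iff _ ℝ).mp hPo, one_mul]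

lemma exists_mem_specialOrthogonalGroup_conj_diagonal_eq {ι R : Type*} [Fintype ι] [DecidableEq ι]
    [CommRing R] [IsDomain R] {U : Matrix ι ι R} (hU : U ∈ orthogonalGroup ι R) (d : ι → R) :
    ∃ V ∈ specialOrthogonalGroup ι R, V * diagonal d * Vᵀ = U * diagonal d * Uᵀ := by
  by_cases hdet : U.det = 1
  · exact ⟨U, mem_specialOrthogonalGroup_iff.mpr ⟨hU, hdet⟩, rfl⟩
  have hdet' : U.det = -1 :=
    (mul_self_eq_one_iff.mp (det_mul_self_of_mem_orthogonalGroup hU)).resolve_left hdet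
  obtain ⟨i₀⟩ : Nonempty ι := not_isEmpty_iff.mp fun _ => hdet (det_isEmpty)
  let s : ι → R := fun k => if k = i₀ then -1 else 1
  have hs (k : ι) : s k * s k = 1 := by
    dsimp only [s]
    split_ifs <;> simp
  refine ⟨U * diagonal s, mem_specialOrthogonalGroup_iff.mpr ⟨mul_mem hU ?_, ?_⟩, ?_⟩
  · rw [mem_orthogonalGroup_iff', diagonal_transpose, diagonal_mul_diagonal, funext hs,
      diagonal_one]
  · simp [hdet', s, Finset.prod_ite_eq']
  · have hsds : diagonal s * diagonal d * diagonal s = diagonal d := by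
      rw [diagonal_mul_diagonal, diagonal_mul_diagonal]
      congr 1
      funext k
      linear_combination d k * hs k
    calc U * diagonal s * diagonal d * (U * diagonal s)ᵀ
        = U * (diagonal s * diagonal d * diagonal s) * Uᵀ := by
          simp only [transpose_mul, diagonal_transpose, mul_assoc]
      _ = U * diagonal d * Uᵀ := by rw [hsds]

lemma exists_mem_orthogonalGroup_eq_conj_diagonal_of_posSemidef {ι : Type*} [Fintype ι]
    [DecidableEq ι] {Q : Matrix ι ι ℝ} (hQ : Q.PosSemidef) :
    ∃ U ∈ orthogonalGroup ι ℝ, ∃ d : ι → ℝ, (∀ i, 0 ≤ d i) ∧ Q = U * diagonal d * Uᵀ := by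
  refine ⟨hQ.1.eigenvectorUnitary, hQ.1.eigenvectorUnitary.2, hQ.1.eigenvalues,
    hQ.eigenvalues_nonneg, ?_⟩
  conv_lhs => rw [hQ.1.spectral_theorem]
  simp [Unitary.conjStarAlgAut_apply, star_eq_conjTranspose]

theorem rotation_modeling_of_covariance_general (n : ℕ) :
    (∀ Q : Matrix (Fin n) (Fin n) ℝ, Q.PosSemidef →
      ∃ (lam : Fin n → ℝ) (θ : Fin n → Fin n → ℝ), (∀ i, 0 ≤ lam i) ∧
        Q = rotMat n θ * Matrix.diagonal lam * (rotMat n θ)ᵀ) ∧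
    (∀ (lam : Fin n → ℝ) (θ : Fin n → Fin n → ℝ), (∀ i, 0 ≤ lam i) →
      (rotMat n θ * Matrix.diagonal lam * (rotMat n θ)ᵀ).PosSemidef) := by
  refine ⟨fun Q hQ => ?_, fun lam θ hlam => ?_⟩
  · obtain ⟨U, hU, d, hd, rfl⟩ := exists_mem_orthogonalGroup_eq_conj_diagonal_of_posSemidef hQ
    obtain ⟨V, hV, hVU⟩ := exists_mem_specialOrthogonalGroup_conj_diagonal_eq hU d
    obtain ⟨θ, rfl⟩ := exists_rotMat_eq_of_mem_specialOrthogonalGroup hV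
    exact ⟨d, θ, hd, hVU.symm⟩
  · simpa using (posSemidef_diagonal_iff.mpr hlam).mul_mul_conjTranspose_same (rotMat n θ)

/-- (Lemma 1) For n ≥ 2, every symmetric positive semidefinite Q ∈ ℝ^{n×n} can be written
as Q = V(θ) diag(λ) V(θ)ᵀ with λ_i ≥ 0, and conversely every matrix of this form with
nonnegative diagonal Λ is symmetric positive semidefinite. -/
theorem rotation_modeling_of_covariance (n : ℕ) (hn : 2 ≤ n) :
    (∀ Q : Matrix (Fin n) (Fin n) ℝ, Q.PosSemidef →
      ∃ (lam : Fin n → ℝ) (θ : Fin n → Fin n → ℝ), (∀ i, 0 ≤ lam i) ∧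
        Q = rotMat n θ * Matrix.diagonal lam * (rotMat n θ)ᵀ) ∧
    (∀ (lam : Fin n → ℝ) (θ : Fin n → Fin n → ℝ), (∀ i, 0 ≤ lam i) →
      (rotMat n θ * Matrix.diagonal lam * (rotMat n θ)ᵀ).PosSemidef) :=
  rotation_modeling_of_covariance_general n
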